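/- arXiv:1002.0674 — 3 statements merged into one kernel-verified Lean document; each statement's English description precedes it below -/
import Mathlib

section
/- For dominant integral weights λ and μ of sl_{n+1}, S(λ+μ) = S(λ) + S(μ); i.e., every integral point of the polytope P(λ+μ) decomposes as a sum of an integral point of P(λ) and an integral point of P(μ). -/
open Finset

/-- `(p,q)` indexes the positive root `α_p + ⋯ + α_q` of type `A_n`. -/
abbrev IsRoot (n p q : ℕ) : Prop := 1 ≤ p ∧ p ≤ q ∧ q ≤ n

/-- One step in a Dyck path: `α_{p,q} → α_{p,q+1}` or `α_{p,q} → α_{p+1,q}`. -/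
abbrev RootStep (a b : ℕ × ℕ) : Prop := b = (a.1, a.2 + 1) ∨ b = (a.1 + 1, a.2)

/-- A Dyck path, recorded as the list of index pairs of its roots.  The first
and last entries are simple roots, and each step follows the recursion rule. -/
def IsDyckPath (n : ℕ) (L : List (ℕ × ℕ)) : Prop :=
  L ≠ [] ∧ (∀ a ∈ L, IsRoot n a.1 a.2) ∧
  (L.head!).1 = (L.head!).2 ∧ (L.getLast!).1 = (L.getLast!).2 ∧
  L.Chain' RootStep

/-- A multi-exponent: a tuple of nonnegative integers supported on the
positive roots of `A_n`. -/
def IsMultiExp (n : ℕ) (s : ℕ × ℕ → ℕ) : Prop := ∀ p q, ¬ IsRoot n p q → s (p, q) = 0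

/-- `s ∈ S(λ)` for `λ = Σ_{i=1}^n m i · ω_i` : for every Dyck path from
`α_i` to `α_j` the sum of the entries of `s` along the path is at most
`m_i + ⋯ + m_j`. -/
def InS (n : ℕ) (m : ℕ → ℕ) (s : ℕ × ℕ → ℕ) : Prop :=
  IsMultiExp n s ∧
  ∀ L : List (ℕ × ℕ), IsDyckPath n L →
    (L.map s).sum ≤ ∑ t ∈ Finset.Icc (L.head!).1 (L.getLast!).1, m t

/-!
It suffices to peel off one fundamental weight: for `u ∈ S(ν + ω_k)` we find `t ∈ S(ω_k)` with
`t ≤ u` and `u - t ∈ S(ν)`, and then induct on `μ`. A Dyck path from `α_i` to `α_j` on which `u`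
exceeds the bound `ν_i + ⋯ + ν_j` exceeds it by exactly one and has `i ≤ k ≤ j`. Take for `t` the
indicator of the roots `a` at which the excess `u(P) - (ν_i + ⋯ + ν_{k-1})` of paths `P` from
`α_i` to `a` first becomes positive. Extending a path from one such root to a larger one shows that
they form an antichain, so `t ∈ S(ω_k)`; and every tight path contains one, namely the root at
which its own running excess first becomes positive.
-/

theorem List.exists_eq_append_cons_of_lt_sum_map {α : Type*} (f : α → ℕ) {L : List α} {c : ℕ}
    (h : c < (L.map f).sum) :
    ∃ P a Q, L = P ++ a :: Q ∧ (P.map f).sum ≤ c ∧ c < (P.map f).sum + f a := by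
  induction L generalizing c with
  | nil => simp at h
  | cons x L ih =>
    by_cases hx : c < f x
    · exact ⟨[], x, L, rfl, Nat.zero_le c, by simpa using hx⟩
    · obtain ⟨P, a, Q, rfl, h1, h2⟩ := ih (c := c - f x) (by simp at h; omega)
      exact ⟨x :: P, a, Q, rfl, by simp; omega, by simp; omega⟩

theorem List.sum_map_indicator_le_one {α : Type*} [PartialOrder α] {L : List α} {s : Set α}
    (hL : L.Pairwise (· < ·)) (hs : IsAntichain (· ≤ ·) s) :
    (L.map (s.indicator (1 : α → ℕ))).sum ≤ 1 := by
  induction L with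
  | nil => simp
  | cons x L ih =>
    obtain ⟨hxL, hL⟩ := List.pairwise_cons.mp hL
    by_cases hx : x ∈ s
    · have hsum : (L.map (s.indicator (1 : α → ℕ))).sum = 0 := List.sum_eq_zero fun z hz => by
        obtain ⟨y, hy, rfl⟩ := List.mem_map.mp hz
        exact Set.indicator_of_notMem (fun hys => hs hx hys (hxL y hy).ne (hxL y hy).le) _
      simp [Set.indicator_of_mem hx, hsum]
    · simpa [Set.indicator_of_notMem hx] using ih hL

theorem sum_Icc_eq_sum_Ico_add_sum_Icc {M : Type*} [AddCommMonoid M] (m : ℕ → M) {i k j : ℕ}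
    (hik : i ≤ k) (hkj : k ≤ j + 1) :
    ∑ t ∈ Icc i j, m t = ∑ t ∈ Ico i k, m t + ∑ t ∈ Icc k j, m t := by
  rw [← Finset.Ico_add_one_right_eq_Icc, ← Finset.Ico_add_one_right_eq_Icc,
    Finset.sum_Ico_consecutive _ hik hkj]

theorem lt_of_rootStep {a b : ℕ × ℕ} (h : RootStep a b) : a < b := by
  rcases h with rfl | rfl <;> simp [Prod.lt_iff]

inductive RootPath (n : ℕ) : ℕ × ℕ → ℕ × ℕ → List (ℕ × ℕ) → Prop
  | single {a : ℕ × ℕ} : IsRoot n a.1 a.2 → RootPath n a a [a]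
  | cons {a b c : ℕ × ℕ} {L : List (ℕ × ℕ)} :
      IsRoot n a.1 a.2 → RootStep a b → RootPath n b c L → RootPath n a c (a :: L)

theorem rootPath_iff {n : ℕ} {a b : ℕ × ℕ} {L : List (ℕ × ℕ)} :
    RootPath n a b L ↔ L.head? = some a ∧ L.getLast? = some b ∧
      (∀ x ∈ L, IsRoot n x.1 x.2) ∧ L.IsChain RootStep := by
  induction L generalizing a with
  | nil => exact ⟨fun h => (by cases h), by simp⟩
  | cons x L ih =>
    cases L with
    | nil =>
      constructor
      · rintro (ha | ⟨_, _, h⟩)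
        · simpa using ha
        · nomatch h
      · rintro ⟨hx, hb, hroot, -⟩
        cases Option.some.inj hx
        cases Option.some.inj hb
        exact .single (hroot _ List.mem_cons_self)
    | cons y L =>
      constructor
      · rintro (_ | ⟨ha, hab, hL⟩)
        obtain ⟨hy, hlast, hroot, hchain⟩ := ih.mp hL
        cases Option.some.inj hy
        exact ⟨rfl, by simpa using hlast, List.forall_mem_cons.mpr ⟨ha, hroot⟩,
          List.isChain_cons_cons.mpr ⟨hab, hchain⟩⟩
      · rintro ⟨hx, hlast, hroot, hchain⟩
        cases Option.some.inj hx
        obtain ⟨hab, hchain⟩ := List.isChain_cons_cons.mp hchain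
        exact .cons (hroot _ List.mem_cons_self) hab
          (ih.mpr ⟨rfl, by simpa using hlast, fun z hz => hroot z (List.mem_cons_of_mem _ hz),
            hchain⟩)

namespace RootPath

variable {n : ℕ} {a b c x : ℕ × ℕ} {L P Q : List (ℕ × ℕ)}

theorem eq_cons_tail (h : RootPath n a b L) : L = a :: L.tail := by
  cases h <;> rfl

theorem head_mem (h : RootPath n a b L) : a ∈ L := by
  rw [h.eq_cons_tail]
  exact List.mem_cons_self

theorem last_mem (h : RootPath n a b L) : b ∈ L := by
  induction h with
  | single => exact List.mem_singleton_self _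
  | cons _ _ _ ih => exact List.mem_cons_of_mem _ ih

theorem head!_eq (h : RootPath n a b L) : L.head! = a := by
  simp [List.head!_eq_head?_getD, (rootPath_iff.mp h).1]

theorem getLast!_eq (h : RootPath n a b L) : L.getLast! = b := by
  simp [List.getLast!_eq_getLast?_getD, (rootPath_iff.mp h).2.1]

theorem isRoot_of_mem (h : RootPath n a b L) (hx : x ∈ L) : IsRoot n x.1 x.2 :=
  (rootPath_iff.mp h).2.2.1 x hx

theorem mem_le (h : RootPath n a b L) (hx : x ∈ L) : a ≤ x ∧ x ≤ b := by
  induction h generalizing x with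
  | single => rw [List.mem_singleton.mp hx]; exact ⟨le_rfl, le_rfl⟩
  | cons _ hab hL ih =>
    have hb := (lt_of_rootStep hab).le
    rcases List.mem_cons.mp hx with rfl | hx
    · exact ⟨le_rfl, hb.trans (ih hL.head_mem).2⟩
    · exact ⟨hb.trans (ih hx).1, (ih hx).2⟩

theorem pairwise_lt (h : RootPath n a b L) : L.Pairwise (· < ·) := by
  induction h with
  | single => exact List.pairwise_singleton _ _
  | cons _ hab hL ih =>
    exact List.pairwise_cons.mpr
      ⟨fun x hx => (lt_of_rootStep hab).trans_le (hL.mem_le hx).1, ih⟩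

theorem append (hP : RootPath n a b P) (hQ : RootPath n b c Q) :
    RootPath n a c (P ++ Q.tail) := by
  induction hP with
  | single => rw [List.singleton_append, ← hQ.eq_cons_tail]; exact hQ
  | cons ha hab _ ih => exact cons ha hab (ih hQ)

theorem split (h : RootPath n a c (P ++ b :: Q)) :
    RootPath n a b (P ++ [b]) ∧ RootPath n b c (b :: Q) := by
  induction P generalizing a with
  | nil =>
    obtain rfl : a = b := by cases h <;> rfl
    exact ⟨single (h.isRoot_of_mem h.head_mem), h⟩
  | cons x P ih =>
    generalize hL : (x :: P) ++ b :: Q = L at h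
    cases h with
    | single => simp at hL
    | cons ha hab hL' =>
      obtain ⟨rfl, rfl⟩ := List.cons_eq_cons.mp hL
      obtain ⟨h1, h2⟩ := ih hL'
      exact ⟨cons ha hab h1, h2⟩

theorem exists_of_le (ha : IsRoot n a.1 a.2) (hb : IsRoot n b.1 b.2) (hab : a ≤ b) :
    ∃ L, RootPath n a b L := by
  obtain ⟨a1, a2⟩ := a
  obtain ⟨b1, b2⟩ := b
  obtain ⟨h1, h2⟩ := Prod.mk_le_mk.mp hab
  induction hd : b1 - a1 + (b2 - a2) generalizing a1 a2 with
  | zero =>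
    obtain ⟨rfl, rfl⟩ : a1 = b1 ∧ a2 = b2 := by omega
    exact ⟨_, single ha⟩
  | succ d ih =>
    by_cases hq : a2 < b2
    · obtain ⟨L, hL⟩ := ih a1 (a2 + 1) ⟨ha.1, by omega, by omega⟩ (by simp; omega) h1 hq
        (by omega)
      exact ⟨_, cons ha (Or.inl rfl) hL⟩
    · obtain ⟨L, hL⟩ := ih (a1 + 1) a2 ⟨by omega, by omega, ha.2.2⟩ (by simp; omega) (by omega)
        h2 (by omega)
      exact ⟨_, cons ha (Or.inr rfl) hL⟩

end RootPath

theorem isDyckPath_iff {n : ℕ} {L : List (ℕ × ℕ)} :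
    IsDyckPath n L ↔ RootPath n (L.head!.1, L.head!.1) (L.getLast!.1, L.getLast!.1) L := by
  refine ⟨fun ⟨hne, hroot, hhead, hlast, hchain⟩ => rootPath_iff.mpr ⟨?_, ?_, hroot, hchain⟩,
    fun h => ⟨List.ne_nil_of_mem h.head_mem, (rootPath_iff.mp h).2.2.1, ?_, ?_,
      (rootPath_iff.mp h).2.2.2⟩⟩
  · obtain ⟨x, L, rfl⟩ := List.exists_cons_of_ne_nil hne
    simp only [List.head!_cons, List.head?_cons] at hhead ⊢
    exact congrArg some (Prod.ext rfl hhead.symm)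
  · obtain ⟨y, hy⟩ := Option.ne_none_iff_exists'.mp (List.getLast?_eq_none_iff.not.mpr hne)
    simp only [List.getLast!_eq_getLast?_getD, hy, Option.getD_some] at hlast ⊢
    exact congrArg some (Prod.ext rfl hlast.symm)
  · rw [h.head!_eq]
  · rw [h.getLast!_eq]

theorem inS_iff {n : ℕ} {m : ℕ → ℕ} {s : ℕ × ℕ → ℕ} :
    InS n m s ↔ IsMultiExp n s ∧
      ∀ i j L, RootPath n (i, i) (j, j) L → (L.map s).sum ≤ ∑ t ∈ Icc i j, m t := by
  refine and_congr_right fun _ =>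
    ⟨fun h i j L hL => ?_, fun h L hL => h _ _ L (isDyckPath_iff.mp hL)⟩
  have := h L (isDyckPath_iff.mpr (by rwa [hL.head!_eq, hL.getLast!_eq]))
  rwa [hL.head!_eq, hL.getLast!_eq] at this

namespace InS

variable {n k : ℕ} {m m' ν : ℕ → ℕ} {s t u : ℕ × ℕ → ℕ}

theorem sum_le (h : InS n m s) {i j : ℕ} {L : List (ℕ × ℕ)} (hL : RootPath n (i, i) (j, j) L) :
    (L.map s).sum ≤ ∑ t ∈ Icc i j, m t :=
  (inS_iff.mp h).2 i j L hL

theorem zero : InS n m 0 :=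
  inS_iff.mpr ⟨fun _ _ _ => rfl, fun _ _ L _ => by simp [Pi.zero_def]⟩

theorem add (hs : InS n m s) (ht : InS n m' t) : InS n (m + m') (s + t) := by
  refine inS_iff.mpr ⟨fun p q hpq => by simp [hs.1 p q hpq, ht.1 p q hpq], fun i j L hL => ?_⟩
  simp only [Pi.add_apply, Finset.sum_add_distrib]
  show (L.map fun a => s a + t a).sum ≤ _
  rw [List.sum_map_add]
  exact add_le_add (hs.sum_le hL) (ht.sum_le hL)

theorem mono (h : InS n m s) (hm : ∀ i ∈ Icc 1 n, m i ≤ m' i) : InS n m' s := by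
  refine inS_iff.mpr ⟨h.1, fun i j L hL => (h.sum_le hL).trans (Finset.sum_le_sum fun x hx => ?_)⟩
  have hi := hL.isRoot_of_mem hL.head_mem
  have hj := hL.isRoot_of_mem hL.last_mem
  simp only [Finset.mem_Icc] at hx hi hj
  exact hm x (Finset.mem_Icc.mpr ⟨by omega, by omega⟩)

theorem sum_le_add_single (hu : InS n (ν + Pi.single k 1) u) {i j : ℕ} {L : List (ℕ × ℕ)}
    (hL : RootPath n (i, i) (j, j) L) :
    (L.map u).sum ≤ ∑ t ∈ Icc i j, ν t + if i ≤ k ∧ k ≤ j then 1 else 0 := by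
  simpa [Finset.sum_add_distrib, Finset.sum_pi_single'] using hu.sum_le hL

theorem sum_le_of_snd_lt (hu : InS n (ν + Pi.single k 1) u) {i : ℕ} {a : ℕ × ℕ}
    {P : List (ℕ × ℕ)} (hP : RootPath n (i, i) a P) (hak : a.2 < k) :
    (P.map u).sum ≤ ∑ t ∈ Icc i a.2, ν t := by
  have ha := hP.isRoot_of_mem hP.last_mem
  obtain ⟨R, hR⟩ := RootPath.exists_of_le (b := (a.2, a.2)) ha ⟨by omega, le_rfl, ha.2.2⟩
    (Prod.le_def.mpr ⟨ha.2.1, le_rfl⟩)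
  have hPR := hu.sum_le_add_single (hP.append hR)
  rw [if_neg (by omega)] at hPR
  simp only [List.map_append, List.sum_append] at hPR
  omega

theorem sum_le_of_lt_fst (hu : InS n (ν + Pi.single k 1) u) {j : ℕ} {a : ℕ × ℕ}
    {S : List (ℕ × ℕ)} (hS : RootPath n a (j, j) S) (hka : k < a.1) :
    (S.map u).sum ≤ ∑ t ∈ Icc a.1 j, ν t := by
  have ha := hS.isRoot_of_mem hS.head_mem
  obtain ⟨R, hR⟩ := RootPath.exists_of_le (a := (a.1, a.1)) ⟨ha.1, le_rfl, by omega⟩ ha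
    (Prod.le_def.mpr ⟨le_rfl, ha.2.1⟩)
  have hRS := hu.sum_le_add_single (hR.append hS)
  rw [if_neg (by omega)] at hRS
  have hua := List.le_sum_of_mem (List.mem_map_of_mem (f := u) hR.last_mem)
  rw [hS.eq_cons_tail] at hRS ⊢
  simp only [List.map_append, List.sum_append, List.map_cons, List.sum_cons,
    List.tail_cons] at hRS ⊢
  omega

end InS

/-- The excess `u(P) - (ν_i + ⋯ + ν_{k-1})` along paths `P` from `α_i` becomes positive at `a`
and at no earlier root. -/
def IsCrossing (n k : ℕ) (ν : ℕ → ℕ) (u : ℕ × ℕ → ℕ) (a : ℕ × ℕ) : Prop :=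
  a.1 ≤ k ∧ k ≤ a.2 ∧
    (∃ i P, RootPath n (i, i) a P ∧ ∑ t ∈ Ico i k, ν t < (P.map u).sum) ∧
    ∀ i P, RootPath n (i, i) a P → (P.map u).sum ≤ ∑ t ∈ Ico i k, ν t + u a

section Crossing

variable {n k : ℕ} {ν : ℕ → ℕ} {u : ℕ × ℕ → ℕ}

theorem IsCrossing.one_le {a : ℕ × ℕ} (h : IsCrossing n k ν u a) : 1 ≤ u a := by
  obtain ⟨-, -, ⟨i, P, hP, hlt⟩, hle⟩ := h
  have := hle i P hP
  omega

theorem IsCrossing.isRoot {a : ℕ × ℕ} (h : IsCrossing n k ν u a) : IsRoot n a.1 a.2 := by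
  obtain ⟨-, -, ⟨i, P, hP, -⟩, -⟩ := h
  exact hP.isRoot_of_mem hP.last_mem

theorem isAntichain_setOf_isCrossing : IsAntichain (· ≤ ·) {a | IsCrossing n k ν u a} := by
  intro a ha b hb hne hab
  obtain ⟨R, hR⟩ := RootPath.exists_of_le ha.isRoot hb.isRoot hab
  obtain ⟨-, -, ⟨i, P, hP, hlt⟩, -⟩ := ha
  have hbR : b ∈ R.tail := by
    have hb := hR.last_mem
    rw [hR.eq_cons_tail] at hb
    exact (List.mem_cons.mp hb).resolve_left (Ne.symm hne)
  have hle := hb.2.2.2 i _ (hP.append hR)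
  have hub := List.le_sum_of_mem (List.mem_map_of_mem (f := u) hbR)
  simp only [List.map_append, List.sum_append] at hle
  omega

theorem inS_single_indicator_isCrossing :
    InS n (Pi.single k 1) ({a | IsCrossing n k ν u a}.indicator (1 : ℕ × ℕ → ℕ)) := by
  refine inS_iff.mpr ⟨fun p q hpq => Set.indicator_of_notMem (fun h => hpq h.isRoot) _,
    fun i j L hL => ?_⟩
  rw [Finset.sum_pi_single']
  by_cases hex : ∃ a ∈ L, IsCrossing n k ν u a
  · obtain ⟨a, haL, ha⟩ := hex
    have hia := (hL.mem_le haL).1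
    have haj := (hL.mem_le haL).2
    rw [Prod.le_def] at hia haj
    rw [if_pos (Finset.mem_Icc.mpr ⟨hia.1.trans ha.1, ha.2.1.trans haj.2⟩)]
    exact List.sum_map_indicator_le_one hL.pairwise_lt isAntichain_setOf_isCrossing
  · simp only [not_exists, not_and] at hex
    have hzero : (L.map ({a | IsCrossing n k ν u a}.indicator (1 : ℕ × ℕ → ℕ))).sum = 0 :=
      List.sum_eq_zero fun z hz => by
        obtain ⟨a, haL, rfl⟩ := List.mem_map.mp hz
        exact Set.indicator_of_notMem (show a ∉ {a | IsCrossing n k ν u a} from hex a haL) _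
    omega

theorem RootPath.exists_isCrossing_mem (hu : InS n (ν + Pi.single k 1) u) {i j : ℕ}
    {L : List (ℕ × ℕ)} (hL : RootPath n (i, i) (j, j) L) (hik : i ≤ k) (hkj : k ≤ j)
    (htight : ∑ t ∈ Icc i j, ν t < (L.map u).sum) :
    ∃ a ∈ L, IsCrossing n k ν u a := by
  have hsplit := sum_Icc_eq_sum_Ico_add_sum_Icc ν hik (by omega : k ≤ j + 1)
  have hbound := hu.sum_le_add_single hL
  rw [if_pos ⟨hik, hkj⟩] at hbound
  -- `a` is where the running sum along `L` first exceeds `ν_i + ⋯ + ν_{k-1}`.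
  obtain ⟨P, a, Q, rfl, hP, ha⟩ :=
    List.exists_eq_append_cons_of_lt_sum_map u (L := L) (c := ∑ t ∈ Ico i k, ν t) (by omega)
  obtain ⟨hPre, hSuf⟩ := hL.split
  simp only [List.map_append, List.map_cons, List.sum_append, List.sum_cons] at htight hbound
  have hPre_sum : ∑ t ∈ Ico i k, ν t < ((P ++ [a]).map u).sum := by simpa using ha
  have hka : k ≤ a.2 := by
    by_contra! hak
    have := hu.sum_le_of_snd_lt hPre hak
    have : ∑ t ∈ Icc i a.2, ν t ≤ ∑ t ∈ Ico i k, ν t :=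
      Finset.sum_le_sum_of_subset (Finset.Icc_subset_Ico_right hak)
    omega
  have hak : a.1 ≤ k := by
    by_contra! hka'
    have hSuf_sum := hu.sum_le_of_lt_fst hSuf hka'
    have : ∑ t ∈ Icc a.1 j, ν t ≤ ∑ t ∈ Icc k j, ν t :=
      Finset.sum_le_sum_of_subset (Finset.Icc_subset_Icc_left hka'.le)
    simp only [List.map_cons, List.sum_cons] at hSuf_sum
    omega
  refine ⟨a, by simp, hak, hka, ⟨i, _, hPre, hPre_sum⟩, fun i' P' hP' => ?_⟩
  have hi' := (hP'.mem_le hP'.last_mem).1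
  rw [Prod.le_def] at hi'
  have hglue := hu.sum_le_add_single (hP'.append hSuf)
  have hsplit' := sum_Icc_eq_sum_Ico_add_sum_Icc ν (i := i') (by omega : i' ≤ k)
    (by omega : k ≤ j + 1)
  simp only [List.map_append, List.sum_append, List.tail_cons] at hglue
  split_ifs at hglue <;> omega

end Crossing

theorem InS.exists_sub_single {n k : ℕ} {ν : ℕ → ℕ} {u : ℕ × ℕ → ℕ}
    (hu : InS n (ν + Pi.single k 1) u) :
    ∃ t, InS n (Pi.single k 1) t ∧ t ≤ u ∧ InS n ν (u - t) := by
  set t : ℕ × ℕ → ℕ := {a | IsCrossing n k ν u a}.indicator 1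
  have htu : t ≤ u := Set.indicator_le fun a ha => IsCrossing.one_le ha
  refine ⟨t, inS_single_indicator_isCrossing, htu,
    inS_iff.mpr ⟨fun p q hpq => by simp [hu.1 p q hpq], fun i j L hL => ?_⟩⟩
  have hdecomp : (L.map u).sum = (L.map (u - t)).sum + (L.map t).sum := by
    rw [← List.sum_map_add]
    exact congrArg List.sum (List.map_congr_left fun a _ => (tsub_add_cancel_of_le (htu a)).symm)
  have hbound := hu.sum_le_add_single hL
  by_cases htight : ∑ t ∈ Icc i j, ν t < (L.map u).sum
  · have hik : i ≤ k ∧ k ≤ j := by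
      by_contra hk
      rw [if_neg hk] at hbound
      omega
    obtain ⟨a, haL, ha⟩ := hL.exists_isCrossing_mem hu hik.1 hik.2 htight
    have hta := List.le_sum_of_mem (List.mem_map_of_mem (f := t) haL)
    rw [show t a = 1 from Set.indicator_of_mem (show a ∈ {a | IsCrossing n k ν u a} from ha) _]
      at hta
    rw [if_pos hik] at hbound
    omega
  · omega

theorem InS.exists_eq_add {n : ℕ} {lam mu : ℕ → ℕ} {u : ℕ × ℕ → ℕ} (h : InS n (lam + mu) u) :
    ∃ s t, InS n lam s ∧ InS n mu t ∧ u = s + t := by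
  obtain ⟨N, hN⟩ : ∃ N, ∑ i ∈ Icc 1 n, mu i = N := ⟨_, rfl⟩
  induction N generalizing mu u with
  | zero =>
    refine ⟨u, 0, h.mono fun i hi => ?_, InS.zero, (add_zero u).symm⟩
    simp [Finset.sum_eq_zero_iff.mp hN i hi]
  | succ N ih =>
    obtain ⟨k, hk, hmuk⟩ :=
      Finset.exists_ne_zero_of_sum_ne_zero (s := Icc 1 n) (f := mu) (by omega)
    set mu' := mu - Pi.single k 1
    have hmu : mu = mu' + Pi.single k 1 := by
      ext i
      by_cases hik : i = k
      · subst hik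
        simp only [mu', Pi.add_apply, Pi.sub_apply, Pi.single_eq_same]
        omega
      · simp [mu', hik]
    have hN' : ∑ i ∈ Icc 1 n, mu' i = N := by
      rw [hmu] at hN
      simp only [Pi.add_apply, Finset.sum_add_distrib, Finset.sum_pi_single', if_pos hk] at hN
      omega
    rw [hmu, ← add_assoc] at h
    obtain ⟨t₁, ht₁, ht₁u, hrest⟩ := h.exists_sub_single
    obtain ⟨s, t₂, hs, ht₂, hst⟩ := ih hrest hN'
    refine ⟨s, t₂ + t₁, hs, hmu ▸ ht₂.add ht₁, ?_⟩
    rw [← add_assoc, ← hst, tsub_add_cancel_of_le ht₁u]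

/-- `S(λ + μ) = S(λ) + S(μ)`: a multi-exponent lies in
`S(λ+μ)` if and only if it is the coordinatewise sum of an element of
`S(λ)` and an element of `S(μ)`. -/
theorem InS_add_eq (n : ℕ) (mlam mmu : ℕ → ℕ) (u : ℕ × ℕ → ℕ) :
    InS n (fun i => mlam i + mmu i) u ↔
      ∃ s t : ℕ × ℕ → ℕ, InS n mlam s ∧ InS n mmu t ∧ ∀ a : ℕ × ℕ, u a = s a + t a := by
  constructor
  · intro h
    obtain ⟨s, t, hs, ht, rfl⟩ := InS.exists_eq_add h
    exact ⟨s, t, hs, ht, fun _ => rfl⟩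
  · rintro ⟨s, t, hs, ht, hu⟩
    rw [show u = s + t from funext hu]
    exact hs.add ht
end

section
/- For g = sl_3 and λ = m_1 ω_1 + m_2 ω_2, the number of integral points in the polytope P(λ) = {(r_1, r_2, r_{12}) ∈ ℝ³_{≥0} : r_1 ≤ m_1, r_2 ≤ m_2, r_1 + r_2 + r_{12} ≤ m_1 + m_2} equals (1/2)(m_1+1)(m_2+1)(m_1+m_2+2), the dimension of the irreducible sl_3-module V(λ). -/
/-!
For fixed `r₁ ≤ m₁` and `r₂ ≤ m₂` the admissible `r₁₂` are `0, …, m₁ + m₂ - r₁ - r₂`, so the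
count is `S = ∑ (m₁ + m₂ + 1 - r₁ - r₂)` over the box `[0, m₁] × [0, m₂]`. Adding the sum of
`r₁ + r₂` over the box, which is `(m₁ + 1)(m₂ + 1)(m₁ + m₂)/2` by Gauss, makes every summand
`m₁ + m₂ + 1`; hence `2S = (m₁ + 1)(m₂ + 1)(2(m₁ + m₂ + 1) - (m₁ + m₂))`.
-/

open Finset

lemma card_filter_add_le_range (c n : ℕ) : #{k ∈ range (n + 1) | c + k ≤ n} = n + 1 - c := by
  rw [← card_range (n + 1 - c)]
  congr 1
  ext k
  simp only [mem_filter, mem_range]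
  omega

lemma ncard_setOf_le_le_add_add_le (a b n : ℕ) :
    {r : ℕ × ℕ × ℕ | r.1 ≤ a ∧ r.2.1 ≤ b ∧ r.1 + r.2.1 + r.2.2 ≤ n}.ncard
      = ∑ i ∈ range (a + 1), ∑ j ∈ range (b + 1), (n + 1 - (i + j)) := by
  have hbox : {r : ℕ × ℕ × ℕ | r.1 ≤ a ∧ r.2.1 ≤ b ∧ r.1 + r.2.1 + r.2.2 ≤ n}
      = ↑{r ∈ range (a + 1) ×ˢ range (b + 1) ×ˢ range (n + 1) | r.1 + r.2.1 + r.2.2 ≤ n} := by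
    ext ⟨r₁, r₂, r₁₂⟩
    simp only [Set.mem_ofPred_eq, coe_filter, mem_product, mem_range]
    omega
  rw [hbox, Set.ncard_coe_finset, card_filter, sum_product]
  refine sum_congr rfl fun i _ => ?_
  rw [sum_product]
  refine sum_congr rfl fun j _ => ?_
  exact (card_filter _ _).symm.trans (card_filter_add_le_range (i + j) n)

lemma two_mul_sum_range_id (n : ℕ) : 2 * ∑ i ∈ range (n + 1), i = n * (n + 1) := by
  rw [mul_comm, sum_range_id_mul_two, Nat.add_sub_cancel, mul_comm]

lemma two_mul_sum_sum_range_add (a b : ℕ) :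
    2 * ∑ i ∈ range (a + 1), ∑ j ∈ range (b + 1), (i + j) = (a + 1) * (b + 1) * (a + b) := by
  rw [sum_comm]
  simp only [sum_add_distrib, sum_const, card_range, smul_eq_mul]
  rw [← mul_sum]
  have ha := two_mul_sum_range_id a
  have hb := two_mul_sum_range_id b
  nlinarith

lemma two_mul_sum_sum_range_sub_add (a b : ℕ) :
    2 * ∑ i ∈ range (a + 1), ∑ j ∈ range (b + 1), (a + b + 1 - (i + j))
      = (a + 1) * (b + 1) * (a + b + 2) := by
  have hcomplement : ∑ i ∈ range (a + 1), ∑ j ∈ range (b + 1), (a + b + 1 - (i + j))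
      + ∑ i ∈ range (a + 1), ∑ j ∈ range (b + 1), (i + j) = (a + 1) * (b + 1) * (a + b + 1) := by
    simp only [← sum_add_distrib]
    rw [sum_congr rfl fun i hi => sum_congr rfl fun j hj =>
      show a + b + 1 - (i + j) + (i + j) = a + b + 1 by
        rw [mem_range] at hi hj
        omega]
    simp only [sum_const, card_range, smul_eq_mul, mul_assoc]
  have := two_mul_sum_sum_range_add a b
  nlinarith

/-- For `sl_3` and `λ = m₁ω₁ + m₂ω₂`, the number of integral
points `(r₁, r₂, r₁₂)` of the polytope
`P(λ) = {(r₁,r₂,r₁₂) ∈ ℝ³_{≥0} : r₁ ≤ m₁, r₂ ≤ m₂, r₁ + r₂ + r₁₂ ≤ m₁ + m₂}`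
equals `(m₁+1)(m₂+1)(m₁+m₂+2)/2`, the dimension of the irreducible
`sl₃`-module `V(λ)`.  (Stated multiplied by 2 to avoid division.) -/
theorem sl3_polytope_count (m₁ m₂ : ℕ) :
    2 * {r : ℕ × ℕ × ℕ |
          r.1 ≤ m₁ ∧ r.2.1 ≤ m₂ ∧ r.1 + r.2.1 + r.2.2 ≤ m₁ + m₂}.ncard
      = (m₁ + 1) * (m₂ + 1) * (m₁ + m₂ + 2) := by
  rw [ncard_setOf_le_le_add_add_le, two_mul_sum_sum_range_sub_add]
end

section
/- Mutation monotonicity: fix i and s ∈ S(λ) with minimal set M_i^s and indicator tuple m_i^s. If t¹ is a mutation of m_i^s (i.e. t¹ ≠ m_i^s, t¹ is supported on R_i, has nonnegative entries, and Σ t¹_{j,k} α_{j,k} = Σ (m_i^s)_{j,k} α_{j,k}), and t = t² + t¹ ∈ S(λ) with t² having nonnegative entries, then m_i^s ≪ m_i^t in the lexicographic order induced by the total order (j₁,k₁) ≪ (j₂,k₂) iff k₁ < k₂ or (k₁ = k₂ and j₁ < j₂). -/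
open Finset

/-- `R_i^s`: the indices `(j,k)` of roots in `R_i = {α_{j,k} : j ≤ i ≤ k}` with
`s_{j,k} ≠ 0`. -/
def RiSupp (n i : ℕ) (s : ℕ × ℕ → ℕ) : Set (ℕ × ℕ) :=
  {a | IsRoot n a.1 a.2 ∧ a.1 ≤ i ∧ i ≤ a.2 ∧ s a ≠ 0}

/-- `M_i^s`: the set of minimal elements of `R_i^s` with respect to the
componentwise order `(j,k) ≤ (j',k') ↔ j ≤ j' ∧ k ≤ k'`. -/
def MinSet (n i : ℕ) (s : ℕ × ℕ → ℕ) : Set (ℕ × ℕ) :=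
  {a ∈ RiSupp n i s | ∀ b ∈ RiSupp n i s, b.1 ≤ a.1 → b.2 ≤ a.2 → b = a}

/-- The 0-1 indicator tuple `m_i^s` of the minimal set `M_i^s`. -/
noncomputable def minInd (n i : ℕ) (s : ℕ × ℕ → ℕ) : ℕ × ℕ → ℕ :=
  (MinSet n i s).indicator 1

/-- The total order `≪` on root indices:
`(j₁,k₁) ≪ (j₂,k₂) ↔ k₁ < k₂ ∨ (k₁ = k₂ ∧ j₁ < j₂)`. -/
def llt (a b : ℕ × ℕ) : Prop := a.2 < b.2 ∨ (a.2 = b.2 ∧ a.1 < b.1)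

/-- The strict lexicographic order on tuples, reading the entries in
increasing `≪` order. -/
def lexLt (u v : ℕ × ℕ → ℕ) : Prop :=
  ∃ a : ℕ × ℕ, (∀ b : ℕ × ℕ, llt b a → u b = v b) ∧ u a < v a

/-- The coefficient of the simple root `α_r` in `α_{j,k}`. -/
def rootCoeff (a : ℕ × ℕ) (r : ℕ) : ℕ := if a.1 ≤ r ∧ r ≤ a.2 then 1 else 0

/-!
Let `u = m_i^s` and let `k` be the level (second index) of the `≪`-first entry where `t¹` and `u`
differ. Both are supported on `R_i`, so for `r ≥ i` the coefficient of `α_r` sums the entries on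
levels `≥ r`, and for `r ≤ i` the coefficient of `α_i` minus that of `α_r` sums the entries
`(j, l)` with `j > r`. The first fact gives equal sums on level `k`, so the antichain `M_i^s` has
an element `(j_M, k)` and `t¹` has a nonzero entry `a₀ = (j₀, k) ≠ (j_M, k)`. The second, at
`r = j_M`, forces `j₀ < j_M`: below level `k` the two tuples agree, and there `M_i^s` occupies
exactly the entries with `j > j_M`. Hence no element of `M_i^s` lies below `a₀`, while `t ≥ t¹`
puts some `c ≤ a₀` into `M_i^t`. Every `b ∈ M_i^s \ M_i^t` is then `≪`-preceded by an element of
`M_i^t \ M_i^s`: by `c` if `t¹_b = 0`, and otherwise by an element of `M_i^t` strictly below `b`.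
-/

theorem llt_iff_toLex_lt {a b : ℕ × ℕ} : llt a b ↔ toLex (a.2, a.1) < toLex (b.2, b.1) := by
  rw [Prod.Lex.toLex_lt_toLex]
  rfl

theorem wellFounded_llt : WellFounded llt :=
  (InvImage.wf (fun a : ℕ × ℕ => toLex (a.2, a.1)) wellFounded_lt).mono
    fun _ _ => llt_iff_toLex_lt.1

theorem llt_trans {a b c : ℕ × ℕ} (hab : llt a b) (hbc : llt b c) : llt a c :=
  llt_iff_toLex_lt.2 ((llt_iff_toLex_lt.1 hab).trans (llt_iff_toLex_lt.1 hbc))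

theorem llt_of_lt {a b : ℕ × ℕ} (h : a < b) : llt a b := by
  rw [Prod.lt_iff] at h
  unfold llt
  omega

theorem lexLt_indicator_one {A B : Set (ℕ × ℕ)} (hBA : ∃ c ∈ B, c ∉ A)
    (hAB : ∀ a ∈ A, a ∉ B → ∃ c ∈ B, c ∉ A ∧ llt c a) :
    lexLt (A.indicator 1) (B.indicator 1) := by
  classical
  obtain ⟨c, hcB, hcA⟩ := hBA
  obtain ⟨a, ha, hmin⟩ := wellFounded_llt.has_min {a | ¬(a ∈ A ↔ a ∈ B)} ⟨c, by simp [hcA, hcB]⟩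
  refine ⟨a, fun b hb => ?_, ?_⟩
  · have hAB : b ∈ A ↔ b ∈ B := not_not.1 fun h => hmin b h hb
    simp only [Set.indicator_apply, hAB]
  · by_cases haA : a ∈ A
    · obtain ⟨c, hcB, hcA, hca⟩ := hAB a haA (by simpa [haA] using ha)
      exact absurd hca (hmin c (by simp [hcA, hcB]))
    · simp_all

theorem sum_filter_congr_of_ne_zero {ι M : Type*} [AddCommMonoid M] {s : Finset ι}
    {p q : ι → Prop} [DecidablePred p] [DecidablePred q] {f : ι → M}
    (h : ∀ x ∈ s, f x ≠ 0 → (p x ↔ q x)) :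
    ∑ x ∈ s with p x, f x = ∑ x ∈ s with q x, f x := by
  rw [sum_filter, sum_filter]
  refine sum_congr rfl fun x hx => ?_
  by_cases hf : f x = 0
  · simp only [hf, ite_self]
  · rw [if_congr (h x hx hf) rfl rfl]

section MinSet

variable {n i : ℕ} {s : ℕ × ℕ → ℕ} {a b : ℕ × ℕ}

theorem mem_minSet_iff_minimal : a ∈ MinSet n i s ↔ Minimal (· ∈ RiSupp n i s) a := by
  rw [minimal_iff]
  exact and_congr_right fun _ => forall₂_congr fun b _ => by rw [Prod.le_def, and_imp, eq_comm]

theorem exists_mem_minSet_le (ha : a ∈ RiSupp n i s) : ∃ b ∈ MinSet n i s, b ≤ a := by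
  obtain ⟨b, hba, hb⟩ := exists_minimal_le_of_wellFoundedLT _ a ha
  exact ⟨b, mem_minSet_iff_minimal.2 hb, hba⟩

theorem eq_of_mem_minSet_of_le (ha : a ∈ MinSet n i s) (hb : b ∈ MinSet n i s) (hab : a ≤ b) :
    a = b :=
  (mem_minSet_iff_minimal.1 hb).eq_of_le ha.1 hab

theorem fst_le_of_mem_minSet_of_snd_le (ha : a ∈ MinSet n i s) (hb : b ∈ MinSet n i s)
    (h : b.2 ≤ a.2) : a.1 ≤ b.1 := by
  by_contra! h'
  exact h'.ne (congrArg Prod.fst (eq_of_mem_minSet_of_le hb ha (Prod.le_def.2 ⟨h'.le, h⟩)))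

theorem eq_of_mem_minSet_of_snd_eq (ha : a ∈ MinSet n i s) (hb : b ∈ MinSet n i s)
    (h : a.2 = b.2) : a = b :=
  eq_of_mem_minSet_of_le ha hb
    (Prod.le_def.2 ⟨fst_le_of_mem_minSet_of_snd_le ha hb h.ge, h.le⟩)

theorem fst_lt_iff_snd_lt_of_mem_minSet (ha : a ∈ MinSet n i s) (hb : b ∈ MinSet n i s) :
    a.1 < b.1 ↔ b.2 < a.2 := by
  constructor
  · intro h
    by_contra! h'
    exact (fst_le_of_mem_minSet_of_snd_le hb ha h').not_gt h
  · intro h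
    by_contra! h'
    exact h.ne (congrArg Prod.snd (eq_of_mem_minSet_of_le hb ha (Prod.le_def.2 ⟨h', h.le⟩)))

end MinSet

def RiFinset (n i : ℕ) : Finset (ℕ × ℕ) := {a ∈ Icc 1 n ×ˢ Icc 1 n | a.1 ≤ i ∧ i ≤ a.2}

def rootWeight (n : ℕ) (w : ℕ × ℕ → ℕ) (r : ℕ) : ℕ :=
  ∑ a ∈ Icc 1 n ×ˢ Icc 1 n, w a * rootCoeff a r

section Support

variable {n i : ℕ} {s : ℕ × ℕ → ℕ} {a : ℕ × ℕ}

theorem mem_riFinset : a ∈ RiFinset n i ↔ IsRoot n a.1 a.2 ∧ a.1 ≤ i ∧ i ≤ a.2 := by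
  simp only [RiFinset, mem_filter, mem_product, mem_Icc, IsRoot]
  omega

theorem mem_riSupp_iff : a ∈ RiSupp n i s ↔ a ∈ RiFinset n i ∧ s a ≠ 0 := by
  rw [mem_riFinset]
  exact (and_assoc.trans (and_congr_right' and_assoc)).symm

theorem mem_riFinset_of_mem_minSet (ha : a ∈ MinSet n i s) : a ∈ RiFinset n i :=
  (mem_riSupp_iff.1 ha.1).1

theorem mem_minSet_of_minInd_ne_zero (ha : minInd n i s a ≠ 0) : a ∈ MinSet n i s :=
  Set.mem_of_indicator_ne_zero ha

theorem minInd_of_mem (ha : a ∈ MinSet n i s) : minInd n i s a = 1 :=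
  Set.indicator_of_mem ha _

theorem minInd_of_notMem (ha : a ∉ MinSet n i s) : minInd n i s a = 0 :=
  Set.indicator_of_notMem ha _

theorem mem_riFinset_of_minInd_ne_zero (ha : minInd n i s a ≠ 0) : a ∈ RiFinset n i :=
  mem_riFinset_of_mem_minSet (mem_minSet_of_minInd_ne_zero ha)

end Support

section Weight

variable {n i : ℕ} {w w' : ℕ × ℕ → ℕ}

theorem rootWeight_eq_sum_filter (hw : ∀ a, w a ≠ 0 → a ∈ RiFinset n i) (r : ℕ) :
    rootWeight n w r = ∑ a ∈ RiFinset n i with a.1 ≤ r ∧ r ≤ a.2, w a := by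
  simp only [rootWeight, rootCoeff, mul_ite, mul_one, mul_zero, sum_filter]
  refine (sum_subset (filter_subset _ _) fun a _ ha => ?_).symm
  rw [not_imp_comm.1 (hw a) ha, ite_self]

theorem sum_snd_ge_eq_of_rootWeight_eq
    (hw : ∀ a, w a ≠ 0 → a ∈ RiFinset n i) (hw' : ∀ a, w' a ≠ 0 → a ∈ RiFinset n i)
    (hwt : ∀ r, rootWeight n w r = rootWeight n w' r) {r : ℕ} (hr : i ≤ r) :
    ∑ a ∈ RiFinset n i with r ≤ a.2, w a = ∑ a ∈ RiFinset n i with r ≤ a.2, w' a := by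
  have hP : ∀ a ∈ RiFinset n i, (a.1 ≤ r ∧ r ≤ a.2 ↔ r ≤ a.2) := fun a ha =>
    ⟨And.right, fun h => ⟨(mem_riFinset.1 ha).2.1.trans hr, h⟩⟩
  rw [← filter_congr hP, ← rootWeight_eq_sum_filter hw, ← rootWeight_eq_sum_filter hw', hwt]

theorem sum_snd_eq_eq_of_rootWeight_eq
    (hw : ∀ a, w a ≠ 0 → a ∈ RiFinset n i) (hw' : ∀ a, w' a ≠ 0 → a ∈ RiFinset n i)
    (hwt : ∀ r, rootWeight n w r = rootWeight n w' r) {k : ℕ} (hk : i ≤ k) :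
    ∑ a ∈ RiFinset n i with a.2 = k, w a = ∑ a ∈ RiFinset n i with a.2 = k, w' a := by
  have hsplit : ∀ v : ℕ × ℕ → ℕ, ∑ a ∈ RiFinset n i with k ≤ a.2, v a =
      ∑ a ∈ RiFinset n i with a.2 = k, v a + ∑ a ∈ RiFinset n i with k + 1 ≤ a.2, v a := by
    intro v
    rw [← sum_filter_add_sum_filter_not _ (fun a => a.2 = k), filter_filter, filter_filter]
    congr 2 <;> exact filter_congr fun a _ => by omega
  have h := sum_snd_ge_eq_of_rootWeight_eq hw hw' hwt hk
  rw [hsplit, hsplit, sum_snd_ge_eq_of_rootWeight_eq hw hw' hwt (hk.trans k.le_succ)] at h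
  exact Nat.add_right_cancel h

theorem sum_fst_gt_eq_of_rootWeight_eq
    (hw : ∀ a, w a ≠ 0 → a ∈ RiFinset n i) (hw' : ∀ a, w' a ≠ 0 → a ∈ RiFinset n i)
    (hwt : ∀ r, rootWeight n w r = rootWeight n w' r) {r : ℕ} (hr : r ≤ i) :
    ∑ a ∈ RiFinset n i with r < a.1, w a = ∑ a ∈ RiFinset n i with r < a.1, w' a := by
  have hP : ∀ a ∈ RiFinset n i, (a.1 ≤ r ∧ r ≤ a.2 ↔ a.1 ≤ r) := fun a ha =>
    ⟨And.left, fun h => ⟨h, hr.trans (mem_riFinset.1 ha).2.2⟩⟩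
  have hle := hwt r
  rw [rootWeight_eq_sum_filter hw, rootWeight_eq_sum_filter hw', filter_congr hP] at hle
  have htot := hwt i
  rw [rootWeight_eq_sum_filter hw, rootWeight_eq_sum_filter hw',
    filter_true_of_mem fun a ha => (mem_riFinset.1 ha).2] at htot
  have hsplit := sum_filter_add_sum_filter_not (RiFinset n i) (fun a => a.1 ≤ r) w
  have hsplit' := sum_filter_add_sum_filter_not (RiFinset n i) (fun a => a.1 ≤ r) w'
  simp only [not_le] at hsplit hsplit'
  omega

end Weight

section Mutation

variable {n i : ℕ} {s w : ℕ × ℕ → ℕ} {aM : ℕ × ℕ}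

theorem eq_zero_of_forall_minSet_snd_ne (hw : ∀ a, w a ≠ 0 → a ∈ RiFinset n i)
    (hwt : ∀ r, rootWeight n w r = rootWeight n (minInd n i s) r) {k : ℕ} (hk : i ≤ k)
    (hM : ∀ b ∈ MinSet n i s, b.2 ≠ k) {a : ℕ × ℕ} (ha : a.2 = k) : w a = 0 := by
  by_contra hwa
  have hu : ∑ b ∈ RiFinset n i with b.2 = k, minInd n i s b = 0 :=
    sum_eq_zero fun b hb => minInd_of_notMem fun hbM => hM b hbM (mem_filter.1 hb).2
  rw [← sum_snd_eq_eq_of_rootWeight_eq hw (fun _ => mem_riFinset_of_minInd_ne_zero) hwt hk,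
    sum_eq_zero_iff] at hu
  exact hwa (hu a (mem_filter.2 ⟨hw a hwa, ha⟩))

theorem exists_ne_of_ne_minInd_on_level (hw : ∀ a, w a ≠ 0 → a ∈ RiFinset n i)
    (hwt : ∀ r, rootWeight n w r = rootWeight n (minInd n i s) r) (haM : aM ∈ MinSet n i s)
    {d : ℕ × ℕ} (hd : d.2 = aM.2) (hdw : w d ≠ minInd n i s d) :
    ∃ a₀, w a₀ ≠ 0 ∧ a₀.2 = aM.2 ∧ a₀ ≠ aM := by
  by_contra! h
  have haMR := mem_riFinset_of_mem_minSet haM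
  have hlevel := sum_snd_eq_eq_of_rootWeight_eq hw (fun _ => mem_riFinset_of_minInd_ne_zero) hwt
    (mem_riFinset.1 haMR).2.2
  have hu_other : ∀ b, b.2 = aM.2 → b ≠ aM → minInd n i s b = 0 := fun b hb hbM =>
    minInd_of_notMem fun hbM' => hbM (eq_of_mem_minSet_of_snd_eq hbM' haM hb)
  have hw_other : ∀ b, b.2 = aM.2 → b ≠ aM → w b = 0 := fun b hb hbM =>
    not_imp_comm.1 (fun hwb => h b hwb hb) hbM
  have haM_level : aM ∈ {b ∈ RiFinset n i | b.2 = aM.2} := mem_filter.2 ⟨haMR, rfl⟩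
  rw [sum_eq_single_of_mem aM haM_level fun b hb hbM => hw_other b (mem_filter.1 hb).2 hbM,
    sum_eq_single_of_mem aM haM_level fun b hb hbM => hu_other b (mem_filter.1 hb).2 hbM]
    at hlevel
  by_cases hdM : d = aM
  · exact hdw (hdM ▸ hlevel)
  · exact hdw ((hw_other d hd hdM).trans (hu_other d hd hdM).symm)

theorem fst_le_of_eq_minInd_below (hw : ∀ a, w a ≠ 0 → a ∈ RiFinset n i)
    (hwt : ∀ r, rootWeight n w r = rootWeight n (minInd n i s) r) (haM : aM ∈ MinSet n i s)
    (hbelow : ∀ b, b.2 < aM.2 → w b = minInd n i s b) {a : ℕ × ℕ} (ha : a.2 = aM.2)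
    (hwa : w a ≠ 0) : a.1 ≤ aM.1 := by
  by_contra! hlt
  have hright : ∑ b ∈ RiFinset n i with aM.1 < b.1, minInd n i s b =
      ∑ b ∈ RiFinset n i with b.2 < aM.2, w b := by
    rw [sum_filter_congr_of_ne_zero fun b _ hb =>
      fst_lt_iff_snd_lt_of_mem_minSet haM (mem_minSet_of_minInd_ne_zero hb)]
    exact sum_congr rfl fun b hb => (hbelow b (mem_filter.1 hb).2).symm
  have ha_notMem : a ∉ {b ∈ RiFinset n i | b.2 < aM.2} := fun h =>
    (mem_filter.1 h).2.ne ha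
  have hgrow : w a + ∑ b ∈ RiFinset n i with b.2 < aM.2, w b ≤
      ∑ b ∈ RiFinset n i with aM.1 < b.1, w b := by
    rw [← sum_insert ha_notMem]
    refine sum_le_sum_of_ne_zero fun b hb hwb => mem_filter.2 ⟨hw b hwb, ?_⟩
    rcases mem_insert.1 hb with rfl | hb
    · exact hlt
    · have hb2 := (mem_filter.1 hb).2
      exact (fst_lt_iff_snd_lt_of_mem_minSet haM
        (mem_minSet_of_minInd_ne_zero (hbelow b hb2 ▸ hwb))).2 hb2
  have hfst := sum_fst_gt_eq_of_rootWeight_eq hw (fun _ => mem_riFinset_of_minInd_ne_zero) hwt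
    (mem_riFinset.1 (mem_riFinset_of_mem_minSet haM)).2.1
  omega

theorem exists_mutation_witness (hw : ∀ a, w a ≠ 0 → a ∈ RiFinset n i)
    (hwt : ∀ r, rootWeight n w r = rootWeight n (minInd n i s) r) (hne : w ≠ minInd n i s) :
    ∃ a₀, w a₀ ≠ 0 ∧ (∀ b ∈ MinSet n i s, ¬b ≤ a₀) ∧
      ∀ b ∈ MinSet n i s, w b = 0 → llt a₀ b := by
  obtain ⟨d, hd, hdmin⟩ :=
    wellFounded_llt.has_min {a | w a ≠ minInd n i s a} (Function.ne_iff.1 hne)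
  have hbelow : ∀ b, b.2 < d.2 → w b = minInd n i s b := fun b hb =>
    not_not.1 fun h => hdmin b h (Or.inl hb)
  have hdR : d ∈ RiFinset n i := by
    by_cases hwd : w d = 0
    · exact mem_riFinset_of_minInd_ne_zero (hwd ▸ Ne.symm hd)
    · exact hw d hwd
  obtain ⟨aM, haM, hdM⟩ : ∃ aM ∈ MinSet n i s, aM.2 = d.2 := by
    by_contra! h
    exact hd ((eq_zero_of_forall_minSet_snd_ne hw hwt (mem_riFinset.1 hdR).2.2 h rfl).trans
      (minInd_of_notMem fun hdM => h d hdM rfl).symm)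
  obtain ⟨a₀, hwa₀, ha₀, ha₀M⟩ := exists_ne_of_ne_minInd_on_level hw hwt haM hdM.symm hd
  rw [← hdM] at hbelow
  have hlt : a₀.1 < aM.1 := (fst_le_of_eq_minInd_below hw hwt haM hbelow ha₀ hwa₀).lt_of_ne
    fun h => ha₀M (Prod.ext h ha₀)
  refine ⟨a₀, hwa₀, fun b hb hba => ?_, fun b hb hwb => ?_⟩
  · rw [Prod.le_def] at hba
    have := fst_le_of_mem_minSet_of_snd_le haM hb (hba.2.trans ha₀.le)
    omega
  · rcases lt_trichotomy b.2 aM.2 with h | h | h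
    · rw [hbelow b h, minInd_of_mem hb] at hwb
      exact absurd hwb one_ne_zero
    · rw [eq_of_mem_minSet_of_snd_eq hb haM h]
      exact Or.inr ⟨ha₀, hlt⟩
    · exact Or.inl (ha₀ ▸ h)

end Mutation

theorem mutation_monotonicity_general (n i : ℕ) (s t t1 : ℕ × ℕ → ℕ)
    (hne : t1 ≠ minInd n i s)
    (hsupp : ∀ p q : ℕ, ¬(IsRoot n p q ∧ p ≤ i ∧ i ≤ q) → t1 (p, q) = 0)
    (hwt : ∀ r : ℕ,
      ∑ a ∈ Finset.Icc 1 n ×ˢ Finset.Icc 1 n, t1 a * rootCoeff a r =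
      ∑ a ∈ Finset.Icc 1 n ×ˢ Finset.Icc 1 n, minInd n i s a * rootCoeff a r)
    (hle : ∀ a : ℕ × ℕ, t1 a ≤ t a) :
    lexLt (minInd n i s) (minInd n i t) := by
  have ht1 : ∀ a, t1 a ≠ 0 → a ∈ RiFinset n i := fun a ha =>
    mem_riFinset.2 (not_imp_comm.1 (hsupp a.1 a.2) ha)
  have hsupp_t : ∀ a ∈ RiFinset n i, t1 a ≠ 0 → a ∈ RiSupp n i t := fun a ha h =>
    mem_riSupp_iff.2 ⟨ha, ((Nat.pos_of_ne_zero h).trans_le (hle a)).ne'⟩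
  obtain ⟨a₀, hta₀, hnot_le, hllt⟩ := exists_mutation_witness ht1 hwt hne
  obtain ⟨c, hc, hca₀⟩ := exists_mem_minSet_le (hsupp_t a₀ (ht1 a₀ hta₀) hta₀)
  have hcs : c ∉ MinSet n i s := fun h => hnot_le c h hca₀
  refine lexLt_indicator_one ⟨c, hc, hcs⟩ fun a has hat => ?_
  by_cases hta : t1 a = 0
  · refine ⟨c, hc, hcs, ?_⟩
    rcases hca₀.eq_or_lt with rfl | hlt
    · exact hllt a has hta
    · exact llt_trans (llt_of_lt hlt) (hllt a has hta)
  · obtain ⟨c', hc', hc'a⟩ :=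
      exists_mem_minSet_le (hsupp_t a (mem_riFinset_of_mem_minSet has) hta)
    have hc'_ne : c' ≠ a := fun h => hat (h ▸ hc')
    exact ⟨c', hc', fun h => hc'_ne (eq_of_mem_minSet_of_le h has hc'a),
      llt_of_lt (hc'a.lt_of_ne hc'_ne)⟩

/-- Mutation monotonicity: if `s ∈ S(λ)`, `t¹` is a
mutation of the indicator tuple `m_i^s` (i.e. `t¹ ≠ m_i^s`, `t¹` is
supported on `R_i` and `Σ t¹_{j,k} α_{j,k} = Σ (m_i^s)_{j,k} α_{j,k}`), and
`t = t² + t¹ ∈ S(λ)` with `t²` nonnegative, then `m_i^s ≪ m_i^t` in the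
induced lexicographic order. -/
theorem mutation_monotonicity (n i : ℕ) (m : ℕ → ℕ) (s t t1 : ℕ × ℕ → ℕ)
    (hs : InS n m s)
    (hne : t1 ≠ minInd n i s)
    (hsupp : ∀ p q : ℕ, ¬(IsRoot n p q ∧ p ≤ i ∧ i ≤ q) → t1 (p, q) = 0)
    (hwt : ∀ r : ℕ,
      ∑ a ∈ Finset.Icc 1 n ×ˢ Finset.Icc 1 n, t1 a * rootCoeff a r =
      ∑ a ∈ Finset.Icc 1 n ×ˢ Finset.Icc 1 n, minInd n i s a * rootCoeff a r)
    (ht : InS n m t)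
    (hle : ∀ a : ℕ × ℕ, t1 a ≤ t a) :
    lexLt (minInd n i s) (minInd n i t) :=
  mutation_monotonicity_general n i s t t1 hne hsupp hwt hle
end
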